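/- For every concept class H, the clique dimension is finite if and only if the Littlestone dimension is finite: CD(H) < ∞ ⇔ LD(H) < ∞. -/

import Mathlib

open MeasureTheory
open scoped ENNReal

namespace ContradictionGraph

variable {X : Type*}

/-- A hypothesis `h : X → Bool` is consistent with the dataset `S` of size `m` if it labels
every example in `S` correctly. -/
def Consistent (h : X → Bool) {m : ℕ} (S : Fin m → X × Bool) : Prop :=
  ∀ i, h (S i).1 = (S i).2

/-- A dataset `S` is realizable by the concept class `H` if some hypothesis in `H` is
consistent with it. -/
def Realizable (H : Set (X → Bool)) {m : ℕ} (S : Fin m → X × Bool) : Prop :=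
  ∃ h ∈ H, Consistent h S

/-- Two datasets contradict each other if there is a point `x` such that one of them contains
the labeled example `(x, 0)` and the other contains `(x, 1)`. -/
def Contradicts {m : ℕ} (S S' : Fin m → X × Bool) : Prop :=
  ∃ x : X, ((∃ i, S i = (x, false)) ∧ (∃ j, S' j = (x, true))) ∨
    ((∃ i, S i = (x, true)) ∧ (∃ j, S' j = (x, false)))

/-- The vertex set of the contradiction graph `G_m(H)`: all `H`-realizable datasets of
size `m`. -/
abbrev Vm (H : Set (X → Bool)) (m : ℕ) : Type _ :=
  {S : Fin m → X × Bool // Realizable H S}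

/-- A clique in the contradiction graph `G_m(H)`: a set of vertices every two distinct members
of which contradict each other. -/
def IsClique (H : Set (X → Bool)) (m : ℕ) (C : Set (Vm H m)) : Prop :=
  ∀ S ∈ C, ∀ S' ∈ C, S ≠ S' → Contradicts S.1 S'.1

/-- An independent set in the contradiction graph `G_m(H)`: a set of vertices no two of which
are adjacent (i.e. no two distinct members contradict each other). -/
def IsIndep (H : Set (X → Bool)) (m : ℕ) (I : Set (Vm H m)) : Prop :=
  ∀ S ∈ I, ∀ S' ∈ I, S ≠ S' → ¬ Contradicts S.1 S'.1

/-- The clique number `ω_m` of `G_m(H)`: the supremum of the sizes of cliques (in `ℕ∞`). -/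
noncomputable def cliqueNum (H : Set (X → Bool)) (m : ℕ) : ℕ∞ :=
  ⨆ (C : Set (Vm H m)) (_ : IsClique H m C), C.encard

/-- The clique dimension `CD(H) = sup { m : ω_m = 2^m } ∈ ℕ ∪ {∞}`. -/
noncomputable def cliqueDim (H : Set (X → Bool)) : ℕ∞ :=
  ⨆ (m : ℕ) (_ : cliqueNum H m = 2 ^ m), (m : ℕ∞)

/-- A fractional clique of `G_m(H)`: a nonnegative weight function on the vertices such that
the total weight of every independent set is at most `1`. -/
def IsFracClique (H : Set (X → Bool)) (m : ℕ) (δ : Vm H m → ℝ≥0∞) : Prop :=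
  ∀ I : Set (Vm H m), IsIndep H m I → ∑' S : I, δ S.1 ≤ 1

/-- The fractional clique number `ω*_m` of `G_m(H)`: the supremum of the sizes
`|δ| = Σ_S δ(S)` of fractional cliques. -/
noncomputable def fracCliqueNum (H : Set (X → Bool)) (m : ℕ) : ℝ≥0∞ :=
  ⨆ (δ : Vm H m → ℝ≥0∞) (_ : IsFracClique H m δ), ∑' S, δ S

/-- The fractional clique dimension `CD*(H) = sup { m : ω*_m = 2^m } ∈ ℕ ∪ {∞}`. -/
noncomputable def fracCliqueDim (H : Set (X → Bool)) : ℕ∞ :=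
  ⨆ (m : ℕ) (_ : fracCliqueNum H m = 2 ^ m), (m : ℕ∞)

end ContradictionGraph

namespace ContradictionGraph
variable {X : Type*}

/-- `H` shatters a mistake tree of depth `d`: there is an assignment of points of `X` to the
internal nodes of the complete binary tree of depth `d` (the point fed to branch `ε` at level
`i` depends only on the first `i` bits of `ε`) such that every root-to-leaf dataset is
realizable by `H`. -/
def ShattersTree (H : Set (X → Bool)) (d : ℕ) : Prop :=
  ∃ t : (Fin d → Bool) → Fin d → X,
    (∀ ε ε' : Fin d → Bool, ∀ i : Fin d, (∀ j : Fin d, j < i → ε j = ε' j) → t ε i = t ε' i) ∧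
    ∀ ε : Fin d → Bool, Realizable H (fun i => (t ε i, ε i))

/-- The Littlestone dimension `LD(H)`: the largest `d` such that `H` shatters a mistake tree of
depth `d` (equal to `∞` if `H` shatters arbitrarily deep trees). -/
noncomputable def littlestoneDim (H : Set (X → Bool)) : ℕ∞ :=
  ⨆ (d : ℕ) (_ : ShattersTree H d), (d : ℕ∞)

end ContradictionGraph

/-!
A shattered mistake tree of depth `d` yields `2^d` pairwise contradicting branches, and no clique
of `G_m(H)` has more than `2^m` vertices (the datasets of a clique carve disjoint sets of
hypotheses out of `{0,1}^P`, each of size at least `2^(|P| - m)`); so `LD(H) ≤ CD(H)`.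
Conversely, in a clique of `N ≥ 2mf + 2` realizable datasets of size `m`, double counting the
contradicting pairs gives a point `x` that is labelled `0` in at least `f` of them and `1` in at
least `f` of them. Deleting `x` from those datasets gives cliques for `H_{x=0}` and `H_{x=1}`, so
a clique of size `(2m + 2)^d` produces a shattered tree of depth `d`. Since `(2m + 2)^d ≤ 2^m`
for large `m`, a bound on `LD(H)` bounds `CD(H)`.
-/

namespace ContradictionGraph

open Finset Filter

section

variable {X : Type*}

def RealizableSet (H : Set (X → Bool)) (s : Finset (X × Bool)) : Prop :=
  ∃ h ∈ H, ∀ p ∈ s, h p.1 = p.2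

def Conflict (s t : Finset (X × Bool)) : Prop :=
  ∃ x b, (x, b) ∈ s ∧ (x, !b) ∈ t

theorem RealizableSet.not_conflict_self {H : Set (X → Bool)} {s : Finset (X × Bool)}
    (hs : RealizableSet H s) : ¬ Conflict s s := by
  rintro ⟨x, b, hb, hnb⟩
  obtain ⟨h, -, hcons⟩ := hs
  simpa [hcons _ hb] using hcons _ hnb

theorem RealizableSet.erase [DecidableEq X] {H : Set (X → Bool)} {s : Finset (X × Bool)}
    (hs : RealizableSet H s) {x : X} {c : Bool} (hxc : (x, c) ∈ s) :
    RealizableSet {h ∈ H | h x = c} (s.erase (x, c)) := by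
  obtain ⟨h, hH, hcons⟩ := hs
  exact ⟨h, ⟨hH, hcons _ hxc⟩, fun p hp => hcons p (mem_of_mem_erase hp)⟩

theorem Conflict.erase [DecidableEq X] {s t : Finset (X × Bool)} (hst : Conflict s t)
    {x : X} {c : Bool} (hs : (x, c) ∈ s) (ht : (x, c) ∈ t) (hss : ¬ Conflict s s)
    (htt : ¬ Conflict t t) : Conflict (s.erase (x, c)) (t.erase (x, c)) := by
  obtain ⟨y, b, hyb, hynb⟩ := hst
  refine ⟨y, b, mem_erase.2 ⟨?_, hyb⟩, mem_erase.2 ⟨?_, hynb⟩⟩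
  · intro h
    obtain ⟨rfl, rfl⟩ := Prod.ext_iff.1 h
    exact htt ⟨y, b, ht, hynb⟩
  · intro h
    obtain ⟨rfl, rfl⟩ := Prod.ext_iff.1 h
    exact hss ⟨y, b, hyb, hs⟩

/-- A set `T ⊆ P` encodes the hypothesis on `P` that labels exactly the points of `T` by `1`. -/
def consistentSubsets [DecidableEq X] (P : Finset X) (s : Finset (X × Bool)) : Finset (Finset X) :=
  P.powerset.filter fun T => ∀ p ∈ s, (p.1 ∈ T ↔ p.2 = true)

theorem Conflict.disjoint_consistentSubsets [DecidableEq X] {s t : Finset (X × Bool)}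
    (hst : Conflict s t) (P : Finset X) :
    Disjoint (consistentSubsets P s) (consistentSubsets P t) := by
  obtain ⟨x, b, hs, ht⟩ := hst
  refine disjoint_left.2 fun T hTs hTt => ?_
  have h1 := (mem_filter.1 hTs).2 _ hs
  have h2 := (mem_filter.1 hTt).2 _ ht
  cases b <;> simp_all

theorem two_pow_sub_card_le_card_consistentSubsets [DecidableEq X] {P : Finset X}
    {s : Finset (X × Bool)} (hs : ¬ Conflict s s) (hsP : s.image Prod.fst ⊆ P) :
    2 ^ (#P - #s) ≤ #(consistentSubsets P s) := by
  set D := s.image Prod.fst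
  set W := (s.filter (·.2 = true)).image Prod.fst
  have hWD : W ⊆ D := image_subset_image (filter_subset _ _)
  have hinj : Set.InjOn (· ∪ W) ((P \ D).powerset : Set (Finset X)) := by
    intro U hU U' hU' hUU'
    have hUW : Disjoint U W :=
      (disjoint_of_subset_left (mem_powerset.1 hU) sdiff_disjoint).mono_right hWD
    have hU'W : Disjoint U' W :=
      (disjoint_of_subset_left (mem_powerset.1 hU') sdiff_disjoint).mono_right hWD
    rw [← union_sdiff_cancel_right hUW, ← union_sdiff_cancel_right hU'W]
    exact congrArg (· \ W) hUU'
  have hmaps : Set.MapsTo (· ∪ W) ((P \ D).powerset : Set (Finset X)) (consistentSubsets P s) := by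
    intro U hU
    have hUPD := mem_powerset.1 hU
    refine mem_filter.2 ⟨mem_powerset.2 (union_subset (hUPD.trans sdiff_subset)
      (hWD.trans hsP)), fun ⟨x, b⟩ hxb => ?_⟩
    have hxU : x ∉ U := fun h => (mem_sdiff.1 (hUPD h)).2 (mem_image_of_mem _ hxb)
    have hxW : x ∈ W ↔ (x, true) ∈ s := by simp [W]
    rw [mem_union, hxW, or_iff_right hxU]
    cases b
    · simpa using fun h => hs ⟨x, false, hxb, h⟩
    · simpa using hxb
  calc 2 ^ (#P - #s) ≤ 2 ^ (#P - #D) :=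
        Nat.pow_le_pow_right two_pos (Nat.sub_le_sub_left card_image_le _)
    _ = #(P \ D).powerset := by rw [card_powerset, card_sdiff_of_subset hsP]
    _ ≤ #(consistentSubsets P s) := card_le_card_of_injOn _ hmaps hinj

theorem card_le_two_pow_of_pairwise_conflict [DecidableEq X] {m : ℕ}
    {C : Finset (Finset (X × Bool))} (hcard : ∀ s ∈ C, #s ≤ m)
    (hself : ∀ s ∈ C, ¬ Conflict s s) (hconf : (C : Set (Finset (X × Bool))).Pairwise Conflict) :
    #C ≤ 2 ^ m := by
  set P := C.biUnion (·.image Prod.fst)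
  have hA : ∀ s ∈ C, 2 ^ (#P - m) ≤ #(consistentSubsets P s) := fun s hs =>
    (Nat.pow_le_pow_right two_pos (Nat.sub_le_sub_left (hcard s hs) _)).trans
      (two_pow_sub_card_le_card_consistentSubsets (hself s hs)
        (subset_biUnion_of_mem (·.image Prod.fst) hs))
  have hsum : #C * 2 ^ (#P - m) ≤ 2 ^ m * 2 ^ (#P - m) :=
    calc #C * 2 ^ (#P - m) ≤ ∑ s ∈ C, #(consistentSubsets P s) := by
          rw [← smul_eq_mul, ← sum_const]; exact sum_le_sum hA
      _ = #(C.biUnion (consistentSubsets P)) :=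
          (card_biUnion (hconf.mono' fun _ _ h => h.disjoint_consistentSubsets P)).symm
      _ ≤ #P.powerset := card_le_card (biUnion_subset.2 fun _ _ => filter_subset _ _)
      _ = 2 ^ #P := card_powerset P
      _ ≤ 2 ^ m * 2 ^ (#P - m) := by rw [← pow_add]; exact Nat.pow_le_pow_right two_pos (by omega)
  exact Nat.le_of_mul_le_mul_right hsum (by positivity)

theorem mul_le_sub_one_mul_add_of_lt_or_lt {a b f : ℕ} (h : a < f ∨ b < f) :
    a * b ≤ (f - 1) * (a + b) := by
  rcases h with h | h
  · have : a * b ≤ (f - 1) * b := Nat.mul_le_mul_right _ (by omega)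
    nlinarith
  · have : a * b ≤ a * (f - 1) := Nat.mul_le_mul_left _ (by omega)
    nlinarith

theorem card_offDiag_le_of_pairwise_conflict [DecidableEq X] {C : Finset (Finset (X × Bool))}
    (hconf : (C : Set (Finset (X × Bool))).Pairwise Conflict) :
    #C.offDiag ≤ ∑ x ∈ C.biUnion (·.image Prod.fst),
      2 * (#{s ∈ C | (x, false) ∈ s} * #{s ∈ C | (x, true) ∈ s}) := by
  set A : X → Bool → Finset (Finset (X × Bool)) := fun x c => {s ∈ C | (x, c) ∈ s}
  have hsub : C.offDiag ⊆ (C.biUnion (·.image Prod.fst)).biUnion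
      fun x => A x false ×ˢ A x true ∪ A x true ×ˢ A x false := by
    rintro ⟨s, t⟩ hst
    obtain ⟨hs, ht, hne⟩ := mem_offDiag.1 hst
    obtain ⟨x, b, hxb, hxnb⟩ := hconf hs ht hne
    refine mem_biUnion.2 ⟨x, mem_biUnion.2 ⟨_, hs, mem_image_of_mem Prod.fst hxb⟩, ?_⟩
    cases b
    · exact mem_union_left _ (mem_product.2 ⟨mem_filter.2 ⟨hs, hxb⟩, mem_filter.2 ⟨ht, hxnb⟩⟩)
    · exact mem_union_right _ (mem_product.2 ⟨mem_filter.2 ⟨hs, hxb⟩, mem_filter.2 ⟨ht, hxnb⟩⟩)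
  refine (card_le_card hsub).trans (card_biUnion_le.trans (sum_le_sum fun x _ => ?_))
  refine (card_union_le _ _).trans_eq ?_
  rw [card_product, card_product, mul_comm #(A x true), two_mul]

theorem sum_card_filter_mem_le [DecidableEq X] {m : ℕ} {C : Finset (Finset (X × Bool))}
    (hcard : ∀ s ∈ C, #s ≤ m) (P : Finset X) :
    ∑ x ∈ P, (#{s ∈ C | (x, false) ∈ s} + #{s ∈ C | (x, true) ∈ s}) ≤ #C * m :=
  calc ∑ x ∈ P, (#{s ∈ C | (x, false) ∈ s} + #{s ∈ C | (x, true) ∈ s})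
      = ∑ p ∈ P ×ˢ univ, #{s ∈ C | p ∈ s} := by
        rw [sum_product]; simp [add_comm]
    _ = ∑ s ∈ C, #{p ∈ P ×ˢ univ | p ∈ s} :=
        sum_card_bipartiteAbove_eq_sum_card_bipartiteBelow _
    _ ≤ ∑ s ∈ C, m :=
        sum_le_sum fun s hs => (card_le_card fun _ hp => (mem_filter.1 hp).2).trans (hcard s hs)
    _ = #C * m := by rw [sum_const, smul_eq_mul]

theorem exists_balanced_point [DecidableEq X] {m f : ℕ} {C : Finset (Finset (X × Bool))}
    (hcard : ∀ s ∈ C, #s ≤ m) (hconf : (C : Set (Finset (X × Bool))).Pairwise Conflict)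
    (hC : 2 * m * f + 2 ≤ #C) :
    ∃ x, f ≤ #{s ∈ C | (x, false) ∈ s} ∧ f ≤ #{s ∈ C | (x, true) ∈ s} := by
  by_contra! hno
  have hN : #C * (#C - 1) ≤ #C * (2 * (f - 1) * m) :=
    calc #C * (#C - 1) = #C.offDiag := by rw [offDiag_card, Nat.mul_sub_one]
      _ ≤ ∑ x ∈ C.biUnion (·.image Prod.fst),
            2 * (f - 1) * (#{s ∈ C | (x, false) ∈ s} + #{s ∈ C | (x, true) ∈ s}) := by
        refine (card_offDiag_le_of_pairwise_conflict hconf).trans (sum_le_sum fun x _ => ?_)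
        rw [mul_assoc]
        refine Nat.mul_le_mul_left 2 (mul_le_sub_one_mul_add_of_lt_or_lt ?_)
        exact ((le_or_gt f _).imp (hno x) id).symm
      _ ≤ 2 * (f - 1) * (#C * m) := by
        rw [← mul_sum]; exact Nat.mul_le_mul_left _ (sum_card_filter_mem_le hcard _)
      _ = #C * (2 * (f - 1) * m) := by ring
  have hf : 2 * (f - 1) * m ≤ 2 * m * f := by
    rw [mul_right_comm]; exact Nat.mul_le_mul_left _ (Nat.sub_le _ _)
  have := Nat.le_of_mul_le_mul_left hN (by omega)
  omega

theorem shattersTree_zero {H : Set (X → Bool)} (hH : H.Nonempty) : ShattersTree H 0 :=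
  ⟨fun _ => Fin.elim0, fun _ _ i => i.elim0, fun _ => ⟨hH.some, hH.some_mem, fun i => i.elim0⟩⟩

theorem ShattersTree.cons {H : Set (X → Bool)} {d : ℕ} (x : X)
    (h₀ : ShattersTree {h ∈ H | h x = false} d) (h₁ : ShattersTree {h ∈ H | h x = true} d) :
    ShattersTree H (d + 1) := by
  obtain ⟨t₀, hpre₀, hreal₀⟩ := h₀
  obtain ⟨t₁, hpre₁, hreal₁⟩ := h₁
  refine ⟨fun ε => Fin.cons x ((bif ε 0 then t₁ else t₀) (Fin.tail ε)), ?_, fun ε => ?_⟩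
  · intro ε ε' i
    induction i using Fin.cases with
    | zero => exact fun _ => rfl
    | succ j =>
      intro hpre
      have htail : ∀ k < j, Fin.tail ε k = Fin.tail ε' k :=
        fun k hk => hpre k.succ (Fin.succ_lt_succ_iff.2 hk)
      simp only [Fin.cons_succ, ← hpre 0 (Fin.succ_pos j)]
      cases ε 0
      · exact hpre₀ _ _ j htail
      · exact hpre₁ _ _ j htail
  · have key : ∀ c : Bool, ε 0 = c → ∀ t : (Fin d → Bool) → Fin d → X,
        Realizable {h ∈ H | h x = c} (fun i => (t (Fin.tail ε) i, Fin.tail ε i)) →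
        Realizable H (fun i => ((Fin.cons x (t (Fin.tail ε)) : Fin (d + 1) → X) i, ε i)) := by
      rintro c hc t ⟨h, ⟨hH, hx⟩, hcons⟩
      refine ⟨h, hH, Fin.cases ?_ fun j => hcons j⟩
      simpa [Consistent, hc] using hx
    cases hε : ε 0
    · simpa [hε] using key false hε t₀ (hreal₀ _)
    · simpa [hε] using key true hε t₁ (hreal₁ _)

theorem shattersTree_of_pairwise_conflict [DecidableEq X] {m d : ℕ} {H : Set (X → Bool)}
    {C : Finset (Finset (X × Bool))} (hcard : ∀ s ∈ C, #s ≤ m)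
    (hreal : ∀ s ∈ C, RealizableSet H s)
    (hconf : (C : Set (Finset (X × Bool))).Pairwise Conflict) (hC : (2 * m + 2) ^ d ≤ #C) :
    ShattersTree H d := by
  induction d generalizing H C with
  | zero =>
    obtain ⟨s, hs⟩ := card_pos.1 (lt_of_lt_of_le (by simp) hC)
    obtain ⟨h, hH, -⟩ := hreal s hs
    exact shattersTree_zero ⟨h, hH⟩
  | succ d ih =>
    have hbig : 2 * m * (2 * m + 2) ^ d + 2 ≤ #C := by
      have : 1 ≤ (2 * m + 2) ^ d := Nat.one_le_pow _ _ (by omega)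
      rw [pow_succ] at hC; nlinarith
    obtain ⟨x, h₀, h₁⟩ := exists_balanced_point hcard hconf hbig
    have branch : ∀ c : Bool, (2 * m + 2) ^ d ≤ #{s ∈ C | (x, c) ∈ s} →
        ShattersTree {h ∈ H | h x = c} d := by
      intro c hc
      have hinj : Set.InjOn (·.erase (x, c)) (C.filter ((x, c) ∈ ·) : Set (Finset (X × Bool))) :=
        (erase_injOn' (x, c)).mono fun s hs => (mem_filter.1 hs).2
      refine ih (C := {s ∈ C | (x, c) ∈ s}.image (·.erase (x, c))) ?_ ?_ ?_
        (hc.trans (card_image_of_injOn hinj).ge)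
      · simp only [mem_image, mem_filter]
        rintro _ ⟨s, ⟨hs, -⟩, rfl⟩
        exact (card_erase_le).trans (hcard s hs)
      · simp only [mem_image, mem_filter]
        rintro _ ⟨s, ⟨hs, hxs⟩, rfl⟩
        exact (hreal s hs).erase hxs
      · simp only [coe_image, coe_filter]
        rintro _ ⟨s, ⟨hs, hxs⟩, rfl⟩ _ ⟨t, ⟨ht, hxt⟩, rfl⟩ hne
        exact (hconf hs ht fun h => hne (h ▸ rfl)).erase hxs hxt
          (hreal s hs).not_conflict_self (hreal t ht).not_conflict_self
    exact (branch false h₀).cons x (branch true h₁)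

section Datasets

variable {m : ℕ}

open Classical in
noncomputable def labeledExamples (S : Fin m → X × Bool) : Finset (X × Bool) :=
  univ.image S

theorem card_labeledExamples_le (S : Fin m → X × Bool) : #(labeledExamples S) ≤ m := by
  classical
  exact card_image_le.trans_eq (card_fin m)

theorem Realizable.realizableSet {H : Set (X → Bool)} {S : Fin m → X × Bool}
    (hS : Realizable H S) : RealizableSet H (labeledExamples S) := by
  classical
  obtain ⟨h, hH, hcons⟩ := hS
  refine ⟨h, hH, fun p hp => ?_⟩
  obtain ⟨i, -, rfl⟩ := mem_image.1 hp
  exact hcons i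

theorem Contradicts.conflict {S S' : Fin m → X × Bool} (h : Contradicts S S') :
    Conflict (labeledExamples S) (labeledExamples S') := by
  classical
  obtain ⟨x, ⟨⟨i, hi⟩, ⟨j, hj⟩⟩ | ⟨⟨i, hi⟩, ⟨j, hj⟩⟩⟩ := h
  · exact ⟨x, false, mem_image.2 ⟨i, mem_univ i, hi⟩, mem_image.2 ⟨j, mem_univ j, hj⟩⟩
  · exact ⟨x, true, mem_image.2 ⟨i, mem_univ i, hi⟩, mem_image.2 ⟨j, mem_univ j, hj⟩⟩

theorem contradicts_of_fst_eq_of_snd_ne {S S' : Fin m → X × Bool} {i j : Fin m}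
    (hx : (S i).1 = (S' j).1) (hb : (S i).2 ≠ (S' j).2) : Contradicts S S' := by
  refine ⟨(S i).1, ?_⟩
  cases h : (S i).2 <;> cases h' : (S' j).2 <;> simp only [h, h', ne_eq, not_true_eq_false] at hb
  · exact .inl ⟨⟨i, Prod.ext rfl h⟩, ⟨j, Prod.ext hx.symm h'⟩⟩
  · exact .inr ⟨⟨i, Prod.ext rfl h⟩, ⟨j, Prod.ext hx.symm h'⟩⟩

end Datasets

theorem IsClique.exists_pairwise_conflict {H : Set (X → Bool)} {m k : ℕ} {C : Set (Vm H m)}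
    (hC : IsClique H m C) (hk : (k : ℕ∞) ≤ C.encard) :
    ∃ F : Finset (Finset (X × Bool)), #F = k ∧ (∀ s ∈ F, #s ≤ m) ∧
      (∀ s ∈ F, RealizableSet H s) ∧ (F : Set (Finset (X × Bool))).Pairwise Conflict := by
  classical
  obtain ⟨K, hKC, hKk⟩ := Set.exists_subset_encard_eq hk
  have hK : K.Finite := Set.finite_of_encard_eq_coe hKk
  have hconf : ∀ S ∈ K, ∀ T ∈ K, S ≠ T → Conflict (labeledExamples S.1) (labeledExamples T.1) :=
    fun S hS T hT hne => (hC S (hKC hS) T (hKC hT) hne).conflict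
  have hinj : Set.InjOn (fun S : Vm H m => labeledExamples S.1) K := by
    intro S hS T hT hST
    by_contra hne
    have hST' : labeledExamples S.1 = labeledExamples T.1 := hST
    exact S.2.realizableSet.not_conflict_self (hST' ▸ hconf S hS T hT hne)
  refine ⟨hK.toFinset.image fun S => labeledExamples S.1, ?_, ?_, ?_, ?_⟩
  · rw [card_image_of_injOn (by simpa using hinj)]
    exact_mod_cast hK.encard_eq_coe_toFinset_card.symm.trans hKk
  · simp only [mem_image]
    rintro _ ⟨S, -, rfl⟩
    exact card_labeledExamples_le S.1
  · simp only [mem_image]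
    rintro _ ⟨S, -, rfl⟩
    exact S.2.realizableSet
  · simp only [coe_image, Set.Finite.coe_toFinset]
    rintro _ ⟨S, hS, rfl⟩ _ ⟨T, hT, rfl⟩ hne
    exact hconf S hS T hT fun h => hne (h ▸ rfl)

theorem IsClique.encard_le_two_pow {H : Set (X → Bool)} {m : ℕ} {C : Set (Vm H m)}
    (hC : IsClique H m C) : C.encard ≤ 2 ^ m := by
  classical
  by_contra! hlt
  obtain ⟨F, hF, hcard, hreal, hconf⟩ :=
    hC.exists_pairwise_conflict (k := 2 ^ m + 1) (by exact_mod_cast Order.add_one_le_of_lt hlt)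
  have := card_le_two_pow_of_pairwise_conflict hcard (fun s hs => (hreal s hs).not_conflict_self)
    hconf
  omega

theorem cliqueNum_le_two_pow (H : Set (X → Bool)) (m : ℕ) : cliqueNum H m ≤ 2 ^ m :=
  iSup₂_le fun _ hC => hC.encard_le_two_pow

theorem exists_isClique_le_encard {H : Set (X → Bool)} {m k : ℕ}
    (hk : (k : ℕ∞) ≤ cliqueNum H m) : ∃ C, IsClique H m C ∧ (k : ℕ∞) ≤ C.encard := by
  rcases k with _ | k
  · exact ⟨∅, fun _ h => h.elim, by simp⟩
  · have hk' : (k : ℕ∞) < cliqueNum H m :=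
      lt_of_lt_of_le (by exact_mod_cast k.lt_succ_self) hk
    obtain ⟨C, hC⟩ := lt_iSup_iff.1 hk'
    obtain ⟨hC, hlt⟩ := lt_iSup_iff.1 hC
    exact ⟨C, hC, by push_cast; exact Order.add_one_le_of_lt hlt⟩

theorem shattersTree_of_cliqueNum_eq {H : Set (X → Bool)} {m d : ℕ}
    (hm : cliqueNum H m = 2 ^ m) (hd : (2 * m + 2) ^ d ≤ 2 ^ m) : ShattersTree H d := by
  classical
  obtain ⟨C, hC, hk⟩ :=
    exists_isClique_le_encard (k := (2 * m + 2) ^ d) (by rw [hm]; exact_mod_cast hd)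
  obtain ⟨F, hF, hcard, hreal, hconf⟩ := hC.exists_pairwise_conflict hk
  exact shattersTree_of_pairwise_conflict hcard hreal hconf hF.ge

theorem exists_first_ne {ι β : Type*} [LT ι] [WellFoundedLT ι]
    {ε ε' : ι → β} (hne : ε ≠ ε') : ∃ i, ε i ≠ ε' i ∧ ∀ j < i, ε j = ε' j := by
  obtain ⟨i, hi, hmin⟩ := wellFounded_lt.has_min {i | ε i ≠ ε' i} (Function.ne_iff.1 hne)
  exact ⟨i, hi, fun j hj => not_not.1 fun h => hmin j h hj⟩

theorem ShattersTree.two_pow_le_cliqueNum {H : Set (X → Bool)} {d : ℕ} (h : ShattersTree H d) :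
    2 ^ d ≤ cliqueNum H d := by
  obtain ⟨t, hpre, hreal⟩ := h
  let branch : (Fin d → Bool) → Vm H d := fun ε => ⟨fun i => (t ε i, ε i), hreal ε⟩
  have hinj : Function.Injective branch := fun ε ε' h =>
    funext fun i => congrArg (fun S : Vm H d => (S.1 i).2) h
  have hclique : IsClique H d (Set.range branch) := by
    rintro _ ⟨ε, rfl⟩ _ ⟨ε', rfl⟩ hne
    obtain ⟨i, hi, hpref⟩ := exists_first_ne (ne_of_apply_ne branch hne)
    exact contradicts_of_fst_eq_of_snd_ne (hpre ε ε' i hpref) hi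
  calc (2 : ℕ∞) ^ d = ENat.card (Fin d → Bool) := by simp
    _ ≤ (Set.range branch).encard := hinj.encard_range
    _ ≤ cliqueNum H d := le_iSup₂ (f := fun C (_ : IsClique H d C) => C.encard) _ hclique

theorem cliqueNum_eq_two_pow_of_shattersTree {H : Set (X → Bool)} {d : ℕ}
    (h : ShattersTree H d) : cliqueNum H d = 2 ^ d :=
  (cliqueNum_le_two_pow H d).antisymm h.two_pow_le_cliqueNum

theorem eventually_two_mul_add_two_pow_le_two_pow (d : ℕ) :
    ∀ᶠ m in atTop, (2 * m + 2) ^ d ≤ 2 ^ m := by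
  have hc : (0 : ℝ) < 1 / 4 ^ d := by positivity
  filter_upwards [(isLittleO_pow_const_const_pow_of_one_lt (R := ℝ) d one_lt_two).bound hc,
    eventually_ge_atTop 1] with m hm h1
  rw [Real.norm_of_nonneg (by positivity), Real.norm_of_nonneg (by positivity),
    div_mul_eq_mul_div, one_mul, le_div_iff₀ (by positivity)] at hm
  have hm1 : (1 : ℝ) ≤ m := by exact_mod_cast h1
  have : (2 * m + 2 : ℝ) ^ d ≤ 2 ^ m :=
    calc (2 * m + 2 : ℝ) ^ d ≤ (4 * m) ^ d := by gcongr; linarith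
      _ = (m : ℝ) ^ d * 4 ^ d := by rw [mul_pow, mul_comm]
      _ ≤ 2 ^ m := hm
  exact_mod_cast this

theorem iSup_natCast_ne_top_iff_bddAbove (p : ℕ → Prop) :
    (⨆ (d : ℕ) (_ : p d), (d : ℕ∞)) ≠ ⊤ ↔ BddAbove {d | p d} := by
  rw [iSup_subtype', ENat.iSup_natCast_ne_top]
  simp

end

theorem cliqueDim_finite_iff_littlestoneDim_finite_general {X : Type*}
    (H : Set (X → Bool)) :
    cliqueDim H ≠ ⊤ ↔ littlestoneDim H ≠ ⊤ := by
  rw [cliqueDim, littlestoneDim, iSup_natCast_ne_top_iff_bddAbove,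
    iSup_natCast_ne_top_iff_bddAbove]
  refine ⟨fun h => h.mono fun d hd => cliqueNum_eq_two_pow_of_shattersTree hd, ?_⟩
  rintro ⟨D, hD⟩
  obtain ⟨M, hM⟩ := eventually_atTop.1 (eventually_two_mul_add_two_pow_le_two_pow (D + 1))
  refine ⟨M, fun m hm => not_lt.1 fun hMm => ?_⟩
  have := hD (shattersTree_of_cliqueNum_eq hm (hM m hMm.le))
  omega

/-- For every concept class `H`, the clique dimension is finite if and only if
the Littlestone dimension is finite: `CD(H) < ∞ ⇔ LD(H) < ∞`. -/
theorem cliqueDim_finite_iff_littlestoneDim_finite {X : Type*} [Countable X]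
    (H : Set (X → Bool)) (hH : H.Nonempty) :
    cliqueDim H ≠ ⊤ ↔ littlestoneDim H ≠ ⊤ :=
  cliqueDim_finite_iff_littlestoneDim_finite_general H

end ContradictionGraph
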